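/- arXiv:2010.02518 — 4 statements merged into one kernel-verified Lean document; each statement's English description precedes it below -/
import Mathlib

section
/- Let $n \ge d \ge 2$ and let $M$ be a $t \times n$ binary matrix with column set $\mathcal{F}$. Then $M$ is a $d$-SSM (i.e., for every $\mathcal{F}_0 \subseteq \mathcal{F}$ with $|\mathcal{F}_0| = d$, the intersection of all subsets $\mathcal{F}' \subseteq \mathcal{F}$ whose Boolean sum equals the Boolean sum of $\mathcal{F}_0$ equals $\mathcal{F}_0$) if and only if $M$ is a $\bar{d}$-SSM (the same condition holds for every $\mathcal{F}_0$ with $1 \le |\mathcal{F}_0| \le d$). -/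
/-!
Being recoverable from one's Boolean sum passes to subfamilies: if `G ⊇ F₀` is recoverable and
`F'` has the same Boolean sum as `F₀`, then `F' ∪ (G \ F₀)` has the same Boolean sum as `G`,
hence contains `G`, so `F'` contains `F₀`. Every family of size at most `d ≤ |F|` lies in one of
size exactly `d`, which gives `d`-SSM ⇒ `d̄`-SSM; the converse is immediate once `d ≥ 1`.
-/

/-- The Boolean sum (coordinatewise OR) of a set of binary columns. -/
noncomputable def boolSum {t : ℕ} (F : Finset (Fin t → Bool)) : Fin t → Bool := F.sup id

/-- `F` is a `d`-SSM: for every `F₀ ⊆ F` with `|F₀| = d`, the intersection of all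
subsets of `F` whose Boolean sum equals that of `F₀` is exactly `F₀`. -/
def IsSSM {t : ℕ} (F : Finset (Fin t → Bool)) (d : ℕ) : Prop :=
  ∀ F0 ⊆ F, F0.card = d →
    {c : Fin t → Bool | ∀ F' ⊆ F, boolSum F' = boolSum F0 → c ∈ F'} = (F0 : Set (Fin t → Bool))

/-- `F` is a `d̄`-SSM: the same condition for every `F₀` with `1 ≤ |F₀| ≤ d`. -/
def IsBarSSM {t : ℕ} (F : Finset (Fin t → Bool)) (d : ℕ) : Prop :=
  ∀ F0 ⊆ F, 1 ≤ F0.card → F0.card ≤ d →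
    {c : Fin t → Bool | ∀ F' ⊆ F, boolSum F' = boolSum F0 → c ∈ F'} = (F0 : Set (Fin t → Bool))

section
variable {t : ℕ}

theorem boolSum_union (A B : Finset (Fin t → Bool)) :
    boolSum (A ∪ B) = boolSum A ⊔ boolSum B :=
  Finset.sup_union

def IsRecoverable (F F0 : Finset (Fin t → Bool)) : Prop :=
  ∀ F' ⊆ F, boolSum F' = boolSum F0 → F0 ⊆ F'

theorem setOf_eq_iff_isRecoverable {F F0 : Finset (Fin t → Bool)} (h : F0 ⊆ F) :
    {c : Fin t → Bool | ∀ F' ⊆ F, boolSum F' = boolSum F0 → c ∈ F'} = (F0 : Set (Fin t → Bool))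
      ↔ IsRecoverable F F0 := by
  constructor
  · intro he F' hF' hs c hc
    rw [← Finset.mem_coe, ← he] at hc
    exact hc F' hF' hs
  · intro hrec
    ext c
    exact ⟨fun hc => hc F0 h rfl, fun hc F' hF' hs => hrec F' hF' hs hc⟩

theorem IsRecoverable.of_subset {F G F0 : Finset (Fin t → Bool)} (hG : IsRecoverable F G)
    (hGF : G ⊆ F) (hF0G : F0 ⊆ G) : IsRecoverable F F0 := by
  intro F' hF' hs
  have hsum : boolSum (F' ∪ (G \ F0)) = boolSum G := by
    rw [boolSum_union, hs, ← boolSum_union, Finset.union_sdiff_of_subset hF0G]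
  have hG' : G ⊆ F' ∪ (G \ F0) :=
    hG _ (Finset.union_subset hF' (Finset.sdiff_subset.trans hGF)) hsum
  intro c hc
  simpa [hc] using hG' (hF0G hc)

theorem isSSM_iff {F : Finset (Fin t → Bool)} {d : ℕ} :
    IsSSM F d ↔ ∀ F0 ⊆ F, F0.card = d → IsRecoverable F F0 :=
  forall₂_congr fun _ h => imp_congr_right fun _ => setOf_eq_iff_isRecoverable h

theorem isBarSSM_iff {F : Finset (Fin t → Bool)} {d : ℕ} :
    IsBarSSM F d ↔ ∀ F0 ⊆ F, 1 ≤ F0.card → F0.card ≤ d → IsRecoverable F F0 :=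
  forall₂_congr fun _ h => imp_congr_right fun _ => imp_congr_right fun _ =>
    setOf_eq_iff_isRecoverable h

theorem IsSSM.isBarSSM {F : Finset (Fin t → Bool)} {d : ℕ} (hF : IsSSM F d)
    (hd : d ≤ F.card) : IsBarSSM F d := by
  rw [isSSM_iff] at hF
  rw [isBarSSM_iff]
  intro F0 hF0 _ hle
  obtain ⟨G, hF0G, hGF, hG⟩ := Finset.exists_subsuperset_card_eq hF0 hle hd
  exact (hF G hGF hG).of_subset hGF hF0G

theorem IsBarSSM.isSSM {F : Finset (Fin t → Bool)} {d : ℕ} (hF : IsBarSSM F d) (hd : 1 ≤ d) :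
    IsSSM F d :=
  fun F0 hF0 hcard => hF F0 hF0 (hcard ▸ hd) hcard.le

end

/-- A `t × n` binary matrix with `n ≥ d ≥ 2` is a `d`-SSM iff it is a `d̄`-SSM. -/
theorem ssm_iff_barSSM {t n d : ℕ} (hd : 2 ≤ d) (hn : d ≤ n)
    (F : Finset (Fin t → Bool)) (hcard : F.card = n) :
    IsSSM F d ↔ IsBarSSM F d :=
  ⟨fun h => h.isBarSSM (hcard ▸ hn), fun h => h.isSSM (by omega)⟩
end

section
/- Correctness of the SSM identification rule: let $M$ be a $t \times n$ binary matrix which is a $d$-SSM with columns $\vec{c}_1, \dots, \vec{c}_n$, let $P_0 \subseteq [n]$ be the set of positives with $1 \le |P_0| \le d$, and let $\vec{r} = \bigvee_{j \in P_0} \vec{c}_j$. Define $S = \{j \in [n] : \vec{c}_j \text{ is covered by } \vec{r}\}$ and $P = \{j \in S : \exists i \in [t], \vec{c}_j(i) = 1 \text{ and } \vec{c}_l(i) = 0 \text{ for all } l \in S \setminus \{j\}\}$. Then $P = P_0$. -/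
/-!
Columns are Boolean vectors ordered coordinatewise, "covered by `r`" means `c j ≤ r`, and a
column `j` of `S` has a private coordinate exactly when `c j ≰ ⋁ (S \ {j})`. Every covered
column lies below `r = ⋁ P₀` and `P₀` is covered. So a column outside `P₀` lies below
`⋁ P₀ ≤ ⋁ (S \ {j})`; and if a positive column `j` lay below `⋁ (S \ {j})`, then
`S \ {j}` would still join to `r`, and the SSM property would force `P₀ ⊆ S \ {j}`.
-/

open Finset

namespace Finset

variable {ι L : Type*} [DecidableEq ι] [SemilatticeSup L] [OrderBot L]
  {c : ι → L} {P₀ S : Finset ι} {j : ι}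

theorem mem_of_not_le_sup_erase (hP₀S : P₀ ⊆ S) (hS : ∀ l ∈ S, c l ≤ P₀.sup c)
    (hjS : j ∈ S) (hj : ¬ c j ≤ (S.erase j).sup c) : j ∈ P₀ := by
  by_contra hjP₀
  have hP₀ : P₀ ⊆ S.erase j := fun m hm => mem_erase.2 ⟨fun h => hjP₀ (h ▸ hm), hP₀S hm⟩
  exact hj <| (hS j hjS).trans <| sup_mono hP₀

theorem not_le_sup_erase_of_mem (hP₀S : P₀ ⊆ S) (hS : ∀ l ∈ S, c l ≤ P₀.sup c)
    (hP₀ : ∀ T : Finset ι, T.sup c = P₀.sup c → P₀ ⊆ T) (hj : j ∈ P₀) :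
    ¬ c j ≤ (S.erase j).sup c := by
  intro hle
  have hsup : (S.erase j).sup c = P₀.sup c := by
    refine le_antisymm (Finset.sup_le fun l hl => hS l (mem_of_mem_erase hl))
      (Finset.sup_le fun m hm => ?_)
    obtain rfl | hmj := eq_or_ne m j
    · exact hle
    · exact le_sup (mem_erase.2 ⟨hmj, hP₀S hm⟩)
  exact notMem_erase j S (hP₀ _ hsup hj)

theorem filter_not_le_sup_erase_eq [DecidableLE L] (hP₀S : P₀ ⊆ S)
    (hS : ∀ l ∈ S, c l ≤ P₀.sup c) (hP₀ : ∀ T : Finset ι, T.sup c = P₀.sup c → P₀ ⊆ T) :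
    S.filter (fun j => ¬ c j ≤ (S.erase j).sup c) = P₀ := by
  ext j
  rw [mem_filter]
  exact ⟨fun ⟨hjS, hj⟩ => mem_of_not_le_sup_erase hP₀S hS hjS hj,
    fun hj => ⟨hP₀S hj, not_le_sup_erase_of_mem hP₀S hS hP₀ hj⟩⟩

theorem exists_private_coord_iff {α : Type*} (c : ι → α → Bool) (S : Finset ι) (j : ι) :
    (∃ i, c j i = true ∧ ∀ l ∈ S, l ≠ j → c l i = false) ↔ ¬ c j ≤ (S.erase j).sup c := by
  simp only [Pi.le_def, Bool.le_iff_imp, not_forall, Finset.sup_apply, exists_prop,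
    Bool.not_eq_true, ← bot_eq_false, Finset.sup_eq_bot_iff, mem_erase, and_imp]
  exact exists_congr fun i => and_congr_right' <| forall_congr' fun l => Imp.swap

end Finset

theorem subset_of_sup_eq_of_ssm {ι : Type*} [Fintype ι] [DecidableEq ι] {t d : ℕ}
    {c : ι → Fin t → Bool} (hinj : Function.Injective c)
    (hssm : ∀ F0 ⊆ univ.image c, 1 ≤ F0.card → F0.card ≤ d →
      ∀ F' ⊆ univ.image c, boolSum F' = boolSum F0 → F0 ⊆ F')
    {P₀ : Finset ι} (hd : P₀.card ≤ d) (T : Finset ι) (hT : T.sup c = P₀.sup c) :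
    P₀ ⊆ T := by
  rcases P₀.eq_empty_or_nonempty with rfl | hne
  · exact empty_subset T
  rw [← image_subset_image_iff hinj]
  refine hssm _ (image_subset_image (subset_univ _)) (one_le_card.2 (hne.image c))
    (card_image_le.trans hd) _ (image_subset_image (subset_univ _)) ?_
  simpa only [boolSum, sup_image, Function.id_comp] using hT

theorem ssm_identification_correct_general {t n d : ℕ}
    (c : Fin n → Fin t → Bool) (hinj : Function.Injective c)
    (hssm : ∀ F0 ⊆ Finset.univ.image c, 1 ≤ F0.card → F0.card ≤ d →
      ∀ F' ⊆ Finset.univ.image c, boolSum F' = boolSum F0 → F0 ⊆ F')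
    (P0 : Finset (Fin n)) (h2 : P0.card ≤ d)
    (r : Fin t → Bool) (hr : r = P0.sup c)
    (S : Finset (Fin n))
    (hS : S = Finset.univ.filter (fun j => ∀ i, c j i = true → r i = true))
    (P : Finset (Fin n))
    (hP : P = S.filter (fun j => ∃ i, c j i = true ∧ ∀ l ∈ S, l ≠ j → c l i = false)) :
    P = P0 := by
  have hS_le : ∀ l ∈ S, c l ≤ P0.sup c := by
    simp [hS, ← hr, Pi.le_def, Bool.le_iff_imp]
  have hP0S : P0 ⊆ S := fun m hm => by
    simpa [hS, hr, Pi.le_def, Bool.le_iff_imp] using le_sup (f := c) hm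
  classical
  rw [hP, filter_congr fun j _ => exists_private_coord_iff c S j]
  exact filter_not_le_sup_erase_eq hP0S hS_le (subset_of_sup_eq_of_ssm hinj hssm h2)

/-- Correctness of the SSM identification algorithm: given a `d`-SSM testing matrix
with (distinct) columns `c 1, …, c n`, a set `P₀` of at most `d` positives with
outcome `r = ⋁_{j ∈ P₀} c j`, the algorithm's output `P` (covered columns having a
private coordinate among the covered columns) equals `P₀`. -/
theorem ssm_identification_correct {t n d : ℕ}
    (c : Fin n → Fin t → Bool) (hinj : Function.Injective c)
    (hssm : ∀ F0 ⊆ Finset.univ.image c, 1 ≤ F0.card → F0.card ≤ d →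
      ∀ F' ⊆ Finset.univ.image c, boolSum F' = boolSum F0 → F0 ⊆ F')
    (P0 : Finset (Fin n)) (h1 : 1 ≤ P0.card) (h2 : P0.card ≤ d)
    (r : Fin t → Bool) (hr : r = P0.sup c)
    (S : Finset (Fin n))
    (hS : S = Finset.univ.filter (fun j => ∀ i, c j i = true → r i = true))
    (P : Finset (Fin n))
    (hP : P = S.filter (fun j => ∃ i, c j i = true ∧ ∀ l ∈ S, l ≠ j → c l i = false)) :
    P = P0 :=
  ssm_identification_correct_general c hinj hssm P0 h2 r hr S hS P hP
end

section
/- If $M$ is a $d$-SSM of size $t \times n$, then the set of its columns, viewed as a binary code of length $t$ and size $n$, is a strongly $\bar{d}$-separable code ($\bar{d}$-SSC): for every subset $\mathcal{C}_0$ of codewords with $1 \le |\mathcal{C}_0| \le d$, the intersection of all $\mathcal{C}' \subseteq \mathcal{C}$ with $\mathrm{desc}(\mathcal{C}') = \mathrm{desc}(\mathcal{C}_0)$ equals $\mathcal{C}_0$. -/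
def desc {t : ℕ} {α : Type*} (A : Finset (Fin t → α)) : Set (Fin t → α) :=
  {x | ∀ i, ∃ c ∈ A, x i = c i}

lemma mem_desc_of_mem {t : ℕ} {α : Type*} {A : Finset (Fin t → α)} {c : Fin t → α}
    (hc : c ∈ A) : c ∈ desc A :=
  fun _ => ⟨c, hc, rfl⟩

lemma boolSum_apply_eq_true_iff {t : ℕ} (A : Finset (Fin t → Bool)) (i : Fin t) :
    boolSum A i = true ↔ ∃ c ∈ A, c i = true := by
  rw [boolSum, Finset.sup_apply, ← top_eq_true, Finset.sup_eq_top_iff]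
  rfl

lemma boolSum_apply_eq_true_iff_exists_mem_desc {t : ℕ} (A : Finset (Fin t → Bool)) (i : Fin t) :
    boolSum A i = true ↔ ∃ x ∈ desc A, x i = true := by
  rw [boolSum_apply_eq_true_iff]
  constructor
  · rintro ⟨c, hc, hci⟩
    exact ⟨c, mem_desc_of_mem hc, hci⟩
  · rintro ⟨x, hx, hxi⟩
    obtain ⟨c, hc, hxc⟩ := hx i
    exact ⟨c, hc, hxc ▸ hxi⟩

lemma boolSum_eq_of_desc_eq {t : ℕ} {A B : Finset (Fin t → Bool)} (h : desc A = desc B) :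
    boolSum A = boolSum B := by
  funext i
  rw [Bool.eq_iff_iff, boolSum_apply_eq_true_iff_exists_mem_desc,
    boolSum_apply_eq_true_iff_exists_mem_desc, h]

theorem ssm_columns_are_ssc_general {t d : ℕ}
    (F : Finset (Fin t → Bool))
    (hssm : ∀ F0 ⊆ F, 1 ≤ F0.card → F0.card ≤ d →
      ∀ F' ⊆ F, boolSum F' = boolSum F0 → F0 ⊆ F') :
    ∀ C0 ⊆ F, 1 ≤ C0.card → C0.card ≤ d →
      {x : Fin t → Bool | ∀ C' ⊆ F, desc C' = desc C0 → x ∈ C'} =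
        (C0 : Set (Fin t → Bool)) := by
  intro C0 hC0 hpos hle
  ext x
  exact ⟨fun hx => hx C0 hC0 rfl,
    fun hx C' hC' hdesc => hssm C0 hC0 hpos hle C' hC' (boolSum_eq_of_desc_eq hdesc) hx⟩

/-- The column set of a `d`-SSM, viewed as a binary code, is a strongly
`d̄`-separable code. -/
theorem ssm_columns_are_ssc {t n d : ℕ} (hd : 2 ≤ d) (hn : d ≤ n)
    (F : Finset (Fin t → Bool)) (hcard : F.card = n)
    (hssm : ∀ F0 ⊆ F, 1 ≤ F0.card → F0.card ≤ d →
      ∀ F' ⊆ F, boolSum F' = boolSum F0 → F0 ⊆ F') :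
    ∀ C0 ⊆ F, 1 ≤ C0.card → C0.card ≤ d →
      {x : Fin t → Bool | ∀ C' ⊆ F, desc C' = desc C0 → x ∈ C'} =
        (C0 : Set (Fin t → Bool)) :=
  ssm_columns_are_ssc_general F hssm
end

section
/- In a $d$-SSM with $n \ge d \ge 2$ and at least $d+1$ columns, no column is covered by the Boolean sum of any other single set of $d$ columns in the following strong sense: if $\mathcal{F}_0$ is a set of $d$ columns and $\mathcal{F}'$ is any set of columns with $\bigvee \mathcal{F}' = \bigvee \mathcal{F}_0$, then for every $\vec{c} \in \mathcal{F}_0$ there exists a coordinate $i$ such that $\vec{c}(i) = 1$ and $\vec{x}(i) = 0$ for all $\vec{x} \in \mathcal{F}_S \setminus \{\vec{c}\}$, where $\mathcal{F}_S$ is the set of all columns covered by $\bigvee \mathcal{F}_0$. -/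
open Finset

theorem Finset.sup_id_eq_of_erase_subset {α : Type*} [SemilatticeSup α] [OrderBot α]
    [DecidableEq α] {S F0 : Finset α} {c : α} (hS : ∀ x ∈ S, x ≤ F0.sup id)
    (hF0 : F0.erase c ⊆ S) (hc : c ≤ S.sup id) : S.sup id = F0.sup id := by
  refine le_antisymm (Finset.sup_le hS) (Finset.sup_le fun y hy => ?_)
  by_cases hyc : y = c
  · exact hyc ▸ hc
  · exact le_sup (f := id) (hF0 (mem_erase.mpr ⟨hyc, hy⟩))

theorem exists_private_coord_of_not_le_sup {ι : Type*} {S : Finset (ι → Bool)} {c : ι → Bool}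
    (h : ¬ c ≤ S.sup id) : ∃ i, c i = true ∧ ∀ x ∈ S, x i = false := by
  by_contra! hcov
  refine h fun i => Bool.le_iff_imp.mpr fun hci => ?_
  obtain ⟨x, hx, hxi⟩ := hcov i hci
  exact Bool.le_iff_imp.mp (le_sup (f := id) hx i) (Bool.eq_true_of_not_eq_false hxi)

theorem le_boolSum_iff {t : ℕ} {F : Finset (Fin t → Bool)} {x : Fin t → Bool} :
    x ≤ boolSum F ↔ ∀ i, x i = true → boolSum F i = true := by
  simp only [Pi.le_def, Bool.le_iff_imp]

theorem ssm_private_coordinate_general {t d : ℕ}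
    (F : Finset (Fin t → Bool))
    (hssm : ∀ F0 ⊆ F, 1 ≤ F0.card → F0.card ≤ d →
      ∀ F' ⊆ F, boolSum F' = boolSum F0 → F0 ⊆ F')
    (F0 : Finset (Fin t → Bool)) (hF0 : F0 ⊆ F) (hF0card : F0.card = d)
    (F' : Finset (Fin t → Bool)) :
    ∀ c ∈ F0, ∃ i, c i = true ∧
      ∀ x ∈ (F.filter fun x => ∀ i', x i' = true → boolSum F0 i' = true).erase c,
        x i = false := by
  intro c hc
  set FS := F.filter fun x => ∀ i', x i' = true → boolSum F0 i' = true
  refine exists_private_coord_of_not_le_sup fun hcov => ?_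
  have hFS_le : ∀ x ∈ FS.erase c, x ≤ boolSum F0 := fun x hx =>
    le_boolSum_iff.mpr (mem_filter.mp (mem_of_mem_erase hx)).2
  have hF0_FS : F0 ⊆ FS := fun y hy =>
    mem_filter.mpr ⟨hF0 hy, le_boolSum_iff.mp (le_sup (f := id) hy)⟩
  have hsum : boolSum (FS.erase c) = boolSum F0 :=
    sup_id_eq_of_erase_subset hFS_le (erase_subset_erase c hF0_FS) hcov
  have hsub := hssm F0 hF0 (card_pos.mpr ⟨c, hc⟩) hF0card.le _
    ((erase_subset _ _).trans (filter_subset _ _)) hsum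
  exact (mem_erase.mp (hsub hc)).1 rfl

/-- Key step of the identification algorithm: in a `d`-SSM, each column of the
actual positive set `F₀` has a private coordinate among all columns covered by
the Boolean sum of `F₀`. -/
theorem ssm_private_coordinate {t n d : ℕ} (hd : 2 ≤ d) (hn : d + 1 ≤ n)
    (F : Finset (Fin t → Bool)) (hcard : F.card = n)
    (hssm : ∀ F0 ⊆ F, 1 ≤ F0.card → F0.card ≤ d →
      ∀ F' ⊆ F, boolSum F' = boolSum F0 → F0 ⊆ F')
    (F0 : Finset (Fin t → Bool)) (hF0 : F0 ⊆ F) (hF0card : F0.card = d)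
    (F' : Finset (Fin t → Bool)) (hF' : F' ⊆ F)
    (hsum : boolSum F' = boolSum F0) :
    ∀ c ∈ F0, ∃ i, c i = true ∧
      ∀ x ∈ (F.filter fun x => ∀ i', x i' = true → boolSum F0 i' = true).erase c,
        x i = false :=
  ssm_private_coordinate_general F hssm F0 hF0 hF0card F'
end
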